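/- Every smooth solution F : (0, r₀) → ℝ of the ordinary differential equation F(r)·(F(r) − r·F'(r)) = c for a positive constant c, with F positive, is of the form F(r) = √(c + K r²) for some real constant K. -/

import Mathlib

/-!
The ODE says exactly that `(F r ² - c) / r²` has zero derivative: its derivative is
`-2 (F (F - r F') - c) / r³`. Hence `F r ² = c + K r²` for a constant `K`, and `F > 0` picks the
positive square root.
-/

theorem hasDerivAt_sq_sub_div_sq_eq_zero {F : ℝ → ℝ} {F' c r : ℝ} (hF : HasDerivAt F F' r)
    (hr : r ≠ 0) (h : F r * (F r - r * F') = c) :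
    HasDerivAt (fun x => (F x ^ 2 - c) / x ^ 2) 0 r := by
  have hnum : HasDerivAt (fun x => F x ^ 2 - c) (2 * F r * F') r := by
    simpa using (hF.pow 2).sub_const c
  have hden : HasDerivAt (fun x : ℝ => x ^ 2) (2 * r) r := by
    simpa using hasDerivAt_pow 2 r
  refine (hnum.div hden (pow_ne_zero 2 hr)).congr_deriv ?_
  rw [div_eq_zero_iff]
  left
  linear_combination (-2 * r) * h

theorem exists_sq_eq_add_mul_sq_of_mul_sub_mul_deriv_eq {F : ℝ → ℝ} {c : ℝ} {s : Set ℝ}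
    (hs : IsOpen s) (hs' : IsPreconnected s) (h0 : (0 : ℝ) ∉ s)
    (hFd : ∀ r ∈ s, DifferentiableAt ℝ F r)
    (heq : ∀ r ∈ s, F r * (F r - r * deriv F r) = c) :
    ∃ K : ℝ, ∀ r ∈ s, F r ^ 2 = c + K * r ^ 2 := by
  have hr : ∀ r ∈ s, r ≠ 0 := fun r hr h => h0 (h ▸ hr)
  have hG : ∀ r ∈ s, HasDerivAt (fun x => (F x ^ 2 - c) / x ^ 2) 0 r := fun r hrs =>
    hasDerivAt_sq_sub_div_sq_eq_zero (hFd r hrs).hasDerivAt (hr r hrs) (heq r hrs)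
  obtain ⟨K, hK⟩ := hs.exists_is_const_of_deriv_eq_zero hs'
    (fun r hrs => (hG r hrs).differentiableAt.differentiableWithinAt)
    (fun r hrs => (hG r hrs).deriv)
  refine ⟨K, fun r hrs => ?_⟩
  have := hK r hrs
  field_simp [hr r hrs] at this
  linarith

theorem translation_generator_ODE_solution_general (c r₀ : ℝ) (F : ℝ → ℝ)
    (hFd : ∀ r ∈ Set.Ioo (0:ℝ) r₀, DifferentiableAt ℝ F r)
    (hFpos : ∀ r ∈ Set.Ioo (0:ℝ) r₀, 0 < F r)
    (heq : ∀ r ∈ Set.Ioo (0:ℝ) r₀, F r * (F r - r * deriv F r) = c) :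
    ∃ K : ℝ, ∀ r ∈ Set.Ioo (0:ℝ) r₀,
      0 < c + K * r ^ 2 ∧ F r = Real.sqrt (c + K * r ^ 2) := by
  obtain ⟨K, hK⟩ := exists_sq_eq_add_mul_sq_of_mul_sub_mul_deriv_eq isOpen_Ioo isPreconnected_Ioo
    (fun h => lt_irrefl _ h.1) hFd heq
  refine ⟨K, fun r hr => ⟨?_, ?_⟩⟩
  · rw [← hK r hr]
    exact pow_pos (hFpos r hr) 2
  · rw [← hK r hr, Real.sqrt_sq (hFpos r hr).le]

/-- Every positive differentiable solution `F` of `F(r)·(F(r) − r·F'(r)) = c`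
on `(0, r₀)`, with `c > 0`, is of the form `F(r) = √(c + K r²)` for some real
constant `K` (with `c + K r² > 0` on the interval). -/
theorem translation_generator_ODE_solution (c r₀ : ℝ) (hc : 0 < c) (F : ℝ → ℝ)
    (hFd : ∀ r ∈ Set.Ioo (0:ℝ) r₀, DifferentiableAt ℝ F r)
    (hFpos : ∀ r ∈ Set.Ioo (0:ℝ) r₀, 0 < F r)
    (heq : ∀ r ∈ Set.Ioo (0:ℝ) r₀, F r * (F r - r * deriv F r) = c) :
    ∃ K : ℝ, ∀ r ∈ Set.Ioo (0:ℝ) r₀,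
      0 < c + K * r ^ 2 ∧ F r = Real.sqrt (c + K * r ^ 2) :=
  translation_generator_ODE_solution_general c r₀ F hFd hFpos heq
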